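/- In any group, suppose s_0 and s_1 satisfy (s_0 s_1^{-1})^d = 1 together with the consequence s_0^2 = s_1^2 (equivalently s_0 s_1^{-1} = s_0^{-1} s_1), and suppose s_2 satisfies the braid relations s_1 s_2 s_1 = s_2 s_1 s_2 and s_0 s_2 s_0 = s_2 s_0 s_2. If additionally (s_2 s_0 s_1)^2 = (s_0 s_1 s_2)^2, then s_2 s_0 s_1^{-1} s_2^{-1} s_0 s_1^{-1} = s_0 s_1^{-1} s_2 s_0 s_1^{-1} s_2^{-1} (i.e., s_0 s_1^{-1} commutes with s_2 s_0 s_1^{-1} s_2^{-1}). -/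
import Mathlib


/-- If `(s₀ s₁⁻¹)^d = 1` and `s₀² = s₁²`, `s₁` and `s₂` (resp. `s₀` and `s₂`)
satisfy the braid relation, and `(s₂ s₀ s₁)² = (s₀ s₁ s₂)²`, then
`s₂ s₀ s₁⁻¹ s₂⁻¹ s₀ s₁⁻¹ = s₀ s₁⁻¹ s₂ s₀ s₁⁻¹ s₂⁻¹`, i.e. `s₀ s₁⁻¹` commutes
with `s₂ s₀ s₁⁻¹ s₂⁻¹`. -/
theorem braid_commutation (G : Type*) [Group G] (s₀ s₁ s₂ : G) (d : ℕ)
    (hd : (s₀ * s₁⁻¹) ^ d = 1)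
    (hsq : s₀ ^ 2 = s₁ ^ 2)
    (hbr1 : s₁ * s₂ * s₁ = s₂ * s₁ * s₂)
    (hbr0 : s₀ * s₂ * s₀ = s₂ * s₀ * s₂)
    (hbr3 : (s₂ * s₀ * s₁) ^ 2 = (s₀ * s₁ * s₂) ^ 2) :
    s₂ * s₀ * s₁⁻¹ * s₂⁻¹ * s₀ * s₁⁻¹ = s₀ * s₁⁻¹ * s₂ * s₀ * s₁⁻¹ * s₂⁻¹ := by
  have hsq' : s₀ * s₀ = s₁ * s₁ := by
    have := hsq; rwa [pow_two, pow_two] at this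
  -- s₁ commutes with C := s₂ s₁² s₂
  have h1 : Commute s₁ (s₂ * (s₁ * s₁) * s₂) := by
    show s₁ * (s₂ * (s₁ * s₁) * s₂) = (s₂ * (s₁ * s₁) * s₂) * s₁
    calc s₁ * (s₂ * (s₁ * s₁) * s₂)
        = (s₁ * s₂ * s₁) * (s₁ * s₂) := by group
      _ = (s₂ * s₁ * s₂) * (s₁ * s₂) := by rw [hbr1]
      _ = (s₂ * s₁) * (s₂ * s₁ * s₂) := by group
      _ = (s₂ * s₁) * (s₁ * s₂ * s₁) := by rw [hbr1]
      _ = (s₂ * (s₁ * s₁) * s₂) * s₁ := by group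
  -- s₀ commutes with C (using s₀² = s₁²)
  have h0 : Commute s₀ (s₂ * (s₁ * s₁) * s₂) := by
    show s₀ * (s₂ * (s₁ * s₁) * s₂) = (s₂ * (s₁ * s₁) * s₂) * s₀
    rw [← hsq']
    calc s₀ * (s₂ * (s₀ * s₀) * s₂)
        = (s₀ * s₂ * s₀) * (s₀ * s₂) := by group
      _ = (s₂ * s₀ * s₂) * (s₀ * s₂) := by rw [hbr0]
      _ = (s₂ * s₀) * (s₂ * s₀ * s₂) := by group
      _ = (s₂ * s₀) * (s₀ * s₂ * s₀) := by rw [hbr0]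
      _ = (s₂ * (s₀ * s₀) * s₂) * s₀ := by group
  -- s₀ s₁ commutes with A := s₂ s₀ s₁ s₂ (from hbr3)
  have h3 : Commute (s₀ * s₁) (s₂ * s₀ * s₁ * s₂) := by
    show (s₀ * s₁) * (s₂ * s₀ * s₁ * s₂) = (s₂ * s₀ * s₁ * s₂) * (s₀ * s₁)
    have := hbr3
    rw [pow_two, pow_two] at this
    calc (s₀ * s₁) * (s₂ * s₀ * s₁ * s₂) = (s₀ * s₁ * s₂) * (s₀ * s₁ * s₂) := by group
      _ = (s₂ * s₀ * s₁) * (s₂ * s₀ * s₁) := this.symm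
      _ = (s₂ * s₀ * s₁ * s₂) * (s₀ * s₁) := by group
  -- s₁² commutes with A
  have h4 : Commute (s₁ * s₁) (s₂ * s₀ * s₁ * s₂) := by
    show (s₁ * s₁) * (s₂ * s₀ * s₁ * s₂) = (s₂ * s₀ * s₁ * s₂) * (s₁ * s₁)
    calc (s₁ * s₁) * (s₂ * s₀ * s₁ * s₂)
        = (s₀ * s₀) * (s₂ * s₀ * s₁ * s₂) := by rw [hsq']
      _ = s₀ * (s₀ * s₂ * s₀) * (s₁ * s₂) := by group
      _ = s₀ * (s₂ * s₀ * s₂) * (s₁ * s₂) := by rw [hbr0]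
      _ = (s₀ * s₂ * s₀) * (s₂ * s₁ * s₂) := by group
      _ = (s₀ * s₂ * s₀) * (s₁ * s₂ * s₁) := by rw [hbr1]
      _ = (s₂ * s₀ * s₂) * (s₁ * s₂ * s₁) := by rw [hbr0]
      _ = (s₂ * s₀) * (s₂ * s₁ * s₂) * s₁ := by group
      _ = (s₂ * s₀) * (s₁ * s₂ * s₁) * s₁ := by rw [hbr1]
      _ = (s₂ * s₀ * s₁ * s₂) * (s₁ * s₁) := by group
  -- t := s₀ s₁⁻¹ commutes with A
  have htA : Commute (s₀ * s₁⁻¹) (s₂ * s₀ * s₁ * s₂) := by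
    have : s₀ * s₁⁻¹ = (s₀ * s₁) * (s₁ * s₁)⁻¹ := by group
    rw [this]
    exact h3.mul_left h4.inv_left
  -- t commutes with C
  have htC : Commute (s₀ * s₁⁻¹) (s₂ * (s₁ * s₁) * s₂) := h0.mul_left h1.inv_left
  -- hence t commutes with B = A * C⁻¹ = s₂ s₀ s₁⁻¹ s₂⁻¹
  have htB : Commute (s₀ * s₁⁻¹) (s₂ * s₀ * s₁⁻¹ * s₂⁻¹) := by
    have : s₂ * s₀ * s₁⁻¹ * s₂⁻¹ = (s₂ * s₀ * s₁ * s₂) * (s₂ * (s₁ * s₁) * s₂)⁻¹ := by group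
    rw [this]
    exact htA.mul_right htC.inv_right
  have key := htB.eq
  calc s₂ * s₀ * s₁⁻¹ * s₂⁻¹ * s₀ * s₁⁻¹
      = (s₂ * s₀ * s₁⁻¹ * s₂⁻¹) * (s₀ * s₁⁻¹) := by group
    _ = (s₀ * s₁⁻¹) * (s₂ * s₀ * s₁⁻¹ * s₂⁻¹) := key.symm
    _ = s₀ * s₁⁻¹ * s₂ * s₀ * s₁⁻¹ * s₂⁻¹ := by group
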